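/- (Minimal and maximal extensions.) Let K be a bounded non-negative contraction (0 ≤ K ≤ I) on a complex Hilbert space H, M a closed subspace of H, N = M^⊥, and T = P_M K|_M, Γ = P_N K|_M, S = P_N K|_N the compressions of K. For ε > 0 let Λ_{1,ε} = P_N (K + εI)^{-1}|_N and Λ_{2,ε} = P_N ((1+ε)I − K)^{-1}|_N, and suppose G₁, G₂ are bounded operators on N such that Λ_{1,ε}^{-1} y → G₁ y and Λ_{2,ε}^{-1} y → G₂ y for every y ∈ N as ε → 0⁺. Set X_μ = S − G₁ and X_M = S + G₂. Then the block operators K_{X_μ} = [[T, Γ*],[Γ, X_μ]] and K_{X_M} = [[T, Γ*],[Γ, X_M]] are non-negative contractions, and for every bounded self-adjoint X on N for which K_X = [[T, Γ*],[Γ, X]] is a non-negative contraction one has K_{X_μ} ≤ K_X ≤ K_{X_M} as operators on H. -/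

import Mathlib

/-!
For a positive invertible `A` and `Λ = P_N A⁻¹|_N` invertible, the minimum of `⟪A h, h⟫` over the
`h` with `P_N h = y` equals `⟪Λ⁻¹ y, y⟫`, attained at `h = A⁻¹ Λ⁻¹ y`. Applying this to `K + ε`
and `(1 - K) + ε` and letting `ε → 0⁺`, `⟪G₁ y, y⟫` and `⟪G₂ y, y⟫` become the infima of the
quadratic forms of `K` and `1 - K` over the fibre of `P_N` above `y` (they are the shorted
operators of `K` and `1 - K` to `N`). Since `⟪K_X h, h⟫ = ⟪K h, h⟫ + ⟪(X - S) P_N h, P_N h⟫`,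
this gives `K_X ≥ 0 ↔ X ≥ S - G₁` and `1 - K_X ≥ 0 ↔ X ≤ S + G₂`, and `K_X - K_X'` is the
compression `P_N* (X - X') P_N`.
-/

open ContinuousLinearMap

/-- The block operator `[[T, Γ*],[Γ, X]]` on `H` relative to the decomposition `H = M ⊕ Mᗮ`,
sending `m + n` (`m ∈ M`, `n ∈ Mᗮ`) to `(Tm + Γ*n) + (Γm + Xn)`. -/
noncomputable def blockOpH
    {H : Type*} [NormedAddCommGroup H] [InnerProductSpace ℂ H] [CompleteSpace H]
    (M : Submodule ℂ H) [CompleteSpace M]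
    (T : M →L[ℂ] M) (Γ : M →L[ℂ] Mᗮ) (X : Mᗮ →L[ℂ] Mᗮ) : H →L[ℂ] H :=
  M.subtypeL.comp
      (T.comp (Submodule.orthogonalProjectionOnto M) +
        (ContinuousLinearMap.adjoint Γ).comp (Submodule.orthogonalProjectionOnto Mᗮ)) +
    Mᗮ.subtypeL.comp
      (Γ.comp (Submodule.orthogonalProjectionOnto M) + X.comp (Submodule.orthogonalProjectionOnto Mᗮ))

open Filter Topology
open scoped InnerProductSpace ComplexOrder

theorem ContinuousLinearMap.apply_ringInverse_apply {R E : Type*} [Semiring R]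
    [TopologicalSpace E] [AddCommMonoid E] [Module R E] {A : E →L[R] E} (hA : IsUnit A) (v : E) :
    A (Ring.inverse A v) = v := by
  simpa using DFunLike.congr_fun (Ring.mul_inverse_cancel A hA) v

section InnerProductSpace

variable {H : Type*} [NormedAddCommGroup H] [InnerProductSpace ℂ H]

theorem ContinuousLinearMap.isPositive_iff_inner_nonneg (T : H →L[ℂ] H) :
    T.IsPositive ↔ ∀ x, 0 ≤ ⟪T x, x⟫_ℂ := by
  simp [isPositive_iff_complex, Complex.nonneg_iff, Complex.ext_iff, eq_comm, and_comm]

theorem ContinuousLinearMap.IsPositive.inner_le_of_inner_eq_zero {A : H →L[ℂ] H}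
    (hA : A.IsPositive) {h₀ u : H} (hu : ⟪A h₀, u⟫_ℂ = 0) :
    ⟪A h₀, h₀⟫_ℂ ≤ ⟪A (h₀ + u), h₀ + u⟫_ℂ := by
  have hu' : ⟪A u, h₀⟫_ℂ = 0 := by
    rw [hA.inner_left_eq_inner_right, ← inner_conj_symm, hu, map_zero]
  simpa [inner_add_left, inner_add_right, hu, hu'] using hA.inner_nonneg_left u

theorem ContinuousLinearMap.inner_add_smul_one_apply_self (A : H →L[ℂ] H) (ε : ℝ) (h : H) :
    ⟪(A + (ε : ℂ) • (1 : H →L[ℂ] H)) h, h⟫_ℂ = ⟪A h, h⟫_ℂ + ε * ‖h‖ ^ 2 := by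
  simp [inner_self_eq_norm_sq_to_K]

noncomputable def compression (K : H →L[ℂ] H) (U V : Submodule ℂ H)
    [V.HasOrthogonalProjection] : U →L[ℂ] V :=
  V.orthogonalProjectionOnto ∘L K ∘L U.subtypeL

theorem ContinuousLinearMap.IsPositive.isLeast_inner_of_compression_ringInverse
    {A : H →L[ℂ] H} (hA : A.IsPositive) (hAu : IsUnit A) {N : Submodule ℂ H}
    [N.HasOrthogonalProjection] {Λ : N →L[ℂ] N} (hΛ : Λ = compression (Ring.inverse A) N N)
    (hΛu : IsUnit Λ) (y : N) :
    IsLeast ((fun h => ⟪A h, h⟫_ℂ) '' {h | N.orthogonalProjectionOnto h = y})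
      ⟪Ring.inverse Λ y, y⟫_ℂ := by
  set z := Ring.inverse Λ y
  set h₀ := Ring.inverse A (z : H)
  have hAh₀ : A h₀ = z := apply_ringInverse_apply hAu _
  have hPh₀ : N.orthogonalProjectionOnto h₀ = y := by
    have hΛz : Λ z = y := apply_ringInverse_apply hΛu y
    rw [← hΛz, hΛ]
    rfl
  have hval : ⟪A h₀, h₀⟫_ℂ = ⟪z, y⟫_ℂ := by
    rw [hAh₀, ← N.inner_orthogonalProjectionOnto_eq_of_mem_left, hPh₀, Submodule.coe_inner]
  refine ⟨⟨h₀, hPh₀, hval⟩, ?_⟩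
  rintro _ ⟨h, hh, rfl⟩
  -- `A h₀ = z ∈ N` is orthogonal to `h - h₀ ∈ Nᗮ`
  have hperp : ⟪A h₀, h - h₀⟫_ℂ = 0 := by
    rw [hAh₀, ← N.inner_orthogonalProjectionOnto_eq_of_mem_left, map_sub, hh, hPh₀, sub_self,
      inner_zero_right]
  simpa [← hval] using hA.inner_le_of_inner_eq_zero hperp

/-- Krein's shorted operator of `A` to `N`. The infimum is taken in `ℂ` with its partial order,
which also forces `⟪G y, y⟫` to be real. -/
def IsShortedOperator (A : H →L[ℂ] H) (N : Submodule ℂ H) [N.HasOrthogonalProjection]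
    (G : N →L[ℂ] N) : Prop :=
  ∀ y : N, IsGLB ((fun h => ⟪A h, h⟫_ℂ) '' {h | N.orthogonalProjectionOnto h = y}) ⟪G y, y⟫_ℂ

namespace IsShortedOperator

variable {A : H →L[ℂ] H} {N : Submodule ℂ H} [N.HasOrthogonalProjection] {G : N →L[ℂ] N}

theorem isPositive_iff (hG : IsShortedOperator A N G) {B : H →L[ℂ] H} {R : N →L[ℂ] N}
    (hB : ∀ h, ⟪B h, h⟫_ℂ =
      ⟪A h, h⟫_ℂ + ⟪R (N.orthogonalProjectionOnto h), N.orthogonalProjectionOnto h⟫_ℂ) :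
    B.IsPositive ↔ (R + G).IsPositive := by
  simp only [isPositive_iff_inner_nonneg, add_apply, inner_add_left]
  constructor
  · intro hB0 y
    refine neg_le_iff_add_nonneg'.mp ((hG y).2 ?_)
    rintro _ ⟨h, hh, rfl⟩
    rw [neg_le_iff_add_nonneg, ← hh, ← hB]
    exact hB0 h
  · intro hRG h
    set y := N.orthogonalProjectionOnto h
    have hGA : ⟪G y, y⟫_ℂ ≤ ⟪A h, h⟫_ℂ := (hG y).1 ⟨h, rfl, rfl⟩
    calc (0 : ℂ) ≤ (⟪A h, h⟫_ℂ - ⟪G y, y⟫_ℂ) + (⟪R y, y⟫_ℂ + ⟪G y, y⟫_ℂ) :=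
          add_nonneg (sub_nonneg.mpr hGA) (hRG y)
      _ = ⟪B h, h⟫_ℂ := by rw [hB]; ring

theorem isPositive (hG : IsShortedOperator A N G) (hA : A.IsPositive) : G.IsPositive := by
  simpa using (hG.isPositive_iff (B := A) (R := 0) (by simp)).mp hA

end IsShortedOperator

end InnerProductSpace

section HilbertSpace

variable {H : Type*} [NormedAddCommGroup H] [InnerProductSpace ℂ H] [CompleteSpace H]

theorem ContinuousLinearMap.IsPositive.isUnit_add_smul_one {A : H →L[ℂ] H} (hA : A.IsPositive)
    {ε : ℝ} (hε : 0 < ε) : IsUnit (A + (ε : ℂ) • (1 : H →L[ℂ] H)) := by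
  have hε1 : IsStrictlyPositive ((ε : ℂ) • (1 : H →L[ℂ] H)) := by
    rw [Complex.coe_smul]
    exact IsStrictlyPositive.smul hε isStrictlyPositive_one
  exact (hε1.nonneg_add ((nonneg_iff_isPositive A).mpr hA)).isUnit

theorem ContinuousLinearMap.IsPositive.isShortedOperator_of_tendsto {A : H →L[ℂ] H}
    (hA : A.IsPositive) {N : Submodule ℂ H} [N.HasOrthogonalProjection] {Λ : ℝ → N →L[ℂ] N}
    (hΛ : ∀ ε : ℝ, Λ ε = compression (Ring.inverse (A + (ε : ℂ) • (1 : H →L[ℂ] H))) N N)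
    (hΛu : ∀ ε : ℝ, 0 < ε → IsUnit (Λ ε)) {G : N →L[ℂ] N}
    (hG : ∀ y, Tendsto (fun ε => Ring.inverse (Λ ε) y) (𝓝[>] 0) (𝓝 (G y))) :
    IsShortedOperator A N G := by
  intro y
  have hlim : Tendsto (fun ε => ⟪Ring.inverse (Λ ε) y, y⟫_ℂ) (𝓝[>] 0) (𝓝 ⟪G y, y⟫_ℂ) :=
    (hG y).inner tendsto_const_nhds
  have hmin : ∀ᶠ ε : ℝ in 𝓝[>] 0,
      IsLeast ((fun h => ⟪(A + (ε : ℂ) • (1 : H →L[ℂ] H)) h, h⟫_ℂ) ''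
        {h | N.orthogonalProjectionOnto h = y}) ⟪Ring.inverse (Λ ε) y, y⟫_ℂ :=
    eventually_mem_nhdsWithin.mono fun ε (hε : 0 < ε) =>
      have hpos := hA.add (isPositive_one.smul_of_nonneg (Complex.zero_le_real.mpr hε.le))
      hpos.isLeast_inner_of_compression_ringInverse (hA.isUnit_add_smul_one hε) (hΛ ε) (hΛu ε hε) y
  constructor
  · rintro _ ⟨h, hh, rfl⟩
    have hcont : Continuous fun ε : ℝ => ⟪A h, h⟫_ℂ + ε * ‖h‖ ^ 2 := by fun_prop
    have hlim' : Tendsto (fun ε : ℝ => ⟪(A + (ε : ℂ) • (1 : H →L[ℂ] H)) h, h⟫_ℂ) (𝓝[>] 0)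
        (𝓝 ⟪A h, h⟫_ℂ) := by
      simpa [inner_add_smul_one_apply_self] using (hcont.tendsto 0).mono_left nhdsWithin_le_nhds
    exact le_of_tendsto_of_tendsto hlim hlim' (hmin.mono fun ε hε => hε.2 ⟨h, hh, rfl⟩)
  · intro c hc
    refine ge_of_tendsto hlim ?_
    filter_upwards [hmin, self_mem_nhdsWithin] with ε hε (hεpos : 0 < ε)
    obtain ⟨h, hh, heq⟩ := hε.1
    rw [← heq]
    calc c ≤ ⟪A h, h⟫_ℂ := hc ⟨h, hh, rfl⟩
      _ ≤ ⟪A h, h⟫_ℂ + ε * ‖h‖ ^ 2 := le_add_of_nonneg_right (by positivity)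
      _ = _ := (inner_add_smul_one_apply_self A ε h).symm

variable {M : Submodule ℂ H} [CompleteSpace M]

theorem blockOpH_sub_blockOpH (T : M →L[ℂ] M) (Γ : M →L[ℂ] Mᗮ) (X X' : Mᗮ →L[ℂ] Mᗮ) :
    blockOpH M T Γ X - blockOpH M T Γ X' =
      Mᗮ.subtypeL ∘L (X - X') ∘L Mᗮ.orthogonalProjectionOnto := by
  ext h
  simp [blockOpH]

theorem isPositive_blockOpH_sub_blockOpH (T : M →L[ℂ] M) (Γ : M →L[ℂ] Mᗮ)
    {X X' : Mᗮ →L[ℂ] Mᗮ} (hX : (X - X').IsPositive) :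
    (blockOpH M T Γ X - blockOpH M T Γ X').IsPositive := by
  simpa [blockOpH_sub_blockOpH, Mᗮ.adjoint_subtypeL] using hX.conj_adjoint Mᗮ.subtypeL

theorem IsSelfAdjoint.blockOpH_compression {K : H →L[ℂ] H} (hK : IsSelfAdjoint K) :
    blockOpH M (compression K M M) (compression K M Mᗮ) (compression K Mᗮ Mᗮ) = K := by
  have hΓ : adjoint (compression K M Mᗮ) = compression K Mᗮ M := by
    simp [compression, adjoint_comp, comp_assoc, M.adjoint_subtypeL,
      Mᗮ.adjoint_orthogonalProjectionOnto, hK.adjoint_eq]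
  have hsplit (v : H) : (M.orthogonalProjectionOnto v : H) + Mᗮ.orthogonalProjectionOnto v = v :=
    M.starProjection_add_starProjection_orthogonal v
  ext h
  simp only [blockOpH, hΓ]
  simp only [compression, add_apply, comp_apply, Submodule.coe_subtypeL,
    Submodule.subtype_apply, Submodule.coe_add]
  set m : H := (M.orthogonalProjectionOnto h : H)
  set n : H := (Mᗮ.orthogonalProjectionOnto h : H)
  calc _ = ((M.orthogonalProjectionOnto (K m) : H) + Mᗮ.orthogonalProjectionOnto (K m)) +
        ((M.orthogonalProjectionOnto (K n) : H) + Mᗮ.orthogonalProjectionOnto (K n)) := by abel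
    _ = K h := by rw [hsplit, hsplit, ← map_add, hsplit]

theorem IsSelfAdjoint.inner_blockOpH_compression_apply_self {K : H →L[ℂ] H}
    (hK : IsSelfAdjoint K) (X : Mᗮ →L[ℂ] Mᗮ) (h : H) :
    ⟪blockOpH M (compression K M M) (compression K M Mᗮ) X h, h⟫_ℂ =
      ⟪K h, h⟫_ℂ + ⟪(X - compression K Mᗮ Mᗮ) (Mᗮ.orthogonalProjectionOnto h),
        Mᗮ.orthogonalProjectionOnto h⟫_ℂ := by
  rw [← sub_add_cancel (blockOpH M _ _ X) (blockOpH M _ _ (compression K Mᗮ Mᗮ)),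
    blockOpH_sub_blockOpH, hK.blockOpH_compression, add_apply, inner_add_left, add_comm]
  simp

theorem IsSelfAdjoint.isPositive_blockOpH_compression_iff {K : H →L[ℂ] H}
    (hK : IsSelfAdjoint K) {G : Mᗮ →L[ℂ] Mᗮ} (hG : IsShortedOperator K Mᗮ G)
    (X : Mᗮ →L[ℂ] Mᗮ) :
    (blockOpH M (compression K M M) (compression K M Mᗮ) X).IsPositive ↔
      (X - compression K Mᗮ Mᗮ + G).IsPositive :=
  hG.isPositive_iff (hK.inner_blockOpH_compression_apply_self X)

theorem IsSelfAdjoint.isPositive_one_sub_blockOpH_compression_iff {K : H →L[ℂ] H}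
    (hK : IsSelfAdjoint K) {G : Mᗮ →L[ℂ] Mᗮ} (hG : IsShortedOperator (1 - K) Mᗮ G)
    (X : Mᗮ →L[ℂ] Mᗮ) :
    (1 - blockOpH M (compression K M M) (compression K M Mᗮ) X).IsPositive ↔
      (compression K Mᗮ Mᗮ - X + G).IsPositive :=
  hG.isPositive_iff fun h => by
    simp only [sub_apply, inner_sub_left, hK.inner_blockOpH_compression_apply_self]
    ring

end HilbertSpace

/-- **minimal and maximal extensions.** With the notation of the theorem on
non-negative contractive extensions, set `X_μ = S − G₁` and `X_M = S + G₂`. Then the block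
operators `K_{X_μ}` and `K_{X_M}` are non-negative contractions, and every non-negative
contractive block extension `K_X` satisfies `K_{X_μ} ≤ K_X ≤ K_{X_M}`. -/
theorem stmt_9
    {H : Type*} [NormedAddCommGroup H] [InnerProductSpace ℂ H] [CompleteSpace H]
    (K : H →L[ℂ] H) (hK : K.IsPositive) (hK1 : ((1 : H →L[ℂ] H) - K).IsPositive)
    (M : Submodule ℂ H) [CompleteSpace M]
    (T : M →L[ℂ] M) (Γ : M →L[ℂ] Mᗮ) (S : Mᗮ →L[ℂ] Mᗮ)
    (hT : T = (Submodule.orthogonalProjectionOnto M).comp (K.comp M.subtypeL))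
    (hΓ : Γ = (Submodule.orthogonalProjectionOnto Mᗮ).comp (K.comp M.subtypeL))
    (hS : S = (Submodule.orthogonalProjectionOnto Mᗮ).comp (K.comp Mᗮ.subtypeL))
    (Λ₁ Λ₂ : ℝ → (Mᗮ →L[ℂ] Mᗮ))
    (hΛ₁ : ∀ ε : ℝ, Λ₁ ε = (Submodule.orthogonalProjectionOnto Mᗮ).comp
      ((Ring.inverse (K + (ε : ℂ) • (1 : H →L[ℂ] H))).comp Mᗮ.subtypeL))
    (hΛ₂ : ∀ ε : ℝ, Λ₂ ε = (Submodule.orthogonalProjectionOnto Mᗮ).comp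
      ((Ring.inverse ((1 + ε : ℂ) • (1 : H →L[ℂ] H) - K)).comp Mᗮ.subtypeL))
    (hΛ₁u : ∀ ε : ℝ, 0 < ε → IsUnit (Λ₁ ε)) (hΛ₂u : ∀ ε : ℝ, 0 < ε → IsUnit (Λ₂ ε))
    (G₁ G₂ : Mᗮ →L[ℂ] Mᗮ)
    (hG₁ : ∀ y : Mᗮ, Filter.Tendsto (fun ε : ℝ => Ring.inverse (Λ₁ ε) y)
      (nhdsWithin 0 (Set.Ioi 0)) (nhds (G₁ y)))
    (hG₂ : ∀ y : Mᗮ, Filter.Tendsto (fun ε : ℝ => Ring.inverse (Λ₂ ε) y)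
      (nhdsWithin 0 (Set.Ioi 0)) (nhds (G₂ y)))
:
    ((blockOpH M T Γ (S - G₁)).IsPositive ∧
        ((1 : H →L[ℂ] H) - blockOpH M T Γ (S - G₁)).IsPositive) ∧
    ((blockOpH M T Γ (S + G₂)).IsPositive ∧
        ((1 : H →L[ℂ] H) - blockOpH M T Γ (S + G₂)).IsPositive) ∧
    ∀ X : Mᗮ →L[ℂ] Mᗮ, IsSelfAdjoint X →
      (blockOpH M T Γ X).IsPositive →
      ((1 : H →L[ℂ] H) - blockOpH M T Γ X).IsPositive →
        (blockOpH M T Γ X - blockOpH M T Γ (S - G₁)).IsPositive ∧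
        (blockOpH M T Γ (S + G₂) - blockOpH M T Γ X).IsPositive := by
  have hshort₁ : IsShortedOperator K Mᗮ G₁ := hK.isShortedOperator_of_tendsto hΛ₁ hΛ₁u hG₁
  have hshort₂ : IsShortedOperator (1 - K) Mᗮ G₂ :=
    hK1.isShortedOperator_of_tendsto
      (fun ε => by rw [hΛ₂ ε, add_smul, one_smul, add_sub_right_comm]; rfl) hΛ₂u hG₂
  have hG₁₂ : (G₁ + G₂).IsPositive := (hshort₁.isPositive hK).add (hshort₂.isPositive hK1)
  obtain rfl : T = compression K M M := hT
  obtain rfl : Γ = compression K M Mᗮ := hΓ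
  obtain rfl : S = compression K Mᗮ Mᗮ := hS
  have lower := hK.isSelfAdjoint.isPositive_blockOpH_compression_iff hshort₁
  have upper := hK.isSelfAdjoint.isPositive_one_sub_blockOpH_compression_iff hshort₂
  refine ⟨⟨(lower _).2 ?_, (upper _).2 ?_⟩, ⟨(lower _).2 ?_, (upper _).2 ?_⟩,
    fun X _ hX hX1 => ⟨isPositive_blockOpH_sub_blockOpH _ _ ?_,
      isPositive_blockOpH_sub_blockOpH _ _ ?_⟩⟩
  · convert isPositive_zero using 1; abel
  · convert hG₁₂ using 1; abel
  · convert hG₁₂ using 1; abel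
  · convert isPositive_zero using 1; abel
  · convert (lower X).1 hX using 1; abel
  · convert (upper X).1 hX1 using 1; abel
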